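/- For unit vectors w₁, w₂, w* in ℝᵈ with angles θ₁ = θ(w₁, w*), θ₂ = θ(w₂, w*) satisfying θ₂ ≤ θ₁, the inequality θ₂ − θ₁ ≤ ⟨w₁ − w*, w₂ − w₁⟩ + (1/2)‖w₂ − w₁‖² holds. -/
import Mathlib


open RealInnerProductSpace

theorem stmt_4 {d : ℕ} (w₁ w₂ ws : EuclideanSpace ℝ (Fin d))
    (h₁ : ‖w₁‖ = 1) (h₂ : ‖w₂‖ = 1) (hs : ‖ws‖ = 1)
    (θ₁ θ₂ : ℝ) (hθ₁ : θ₁ = Real.arccos ⟪w₁, ws⟫)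
    (hθ₂ : θ₂ = Real.arccos ⟪w₂, ws⟫)
    (hle : θ₂ ≤ θ₁) :
    θ₂ - θ₁ ≤ ⟪w₁ - ws, w₂ - w₁⟫ + (1 / 2) * ‖w₂ - w₁‖ ^ 2 := by
  have key : ⟪w₁ - ws, w₂ - w₁⟫ + (1 / 2) * ‖w₂ - w₁‖ ^ 2
      = ⟪w₁, ws⟫ - ⟪w₂, ws⟫ := by
    have hn : ‖w₂ - w₁‖ ^ 2 = ⟪w₂ - w₁, w₂ - w₁⟫ := by
      rw [real_inner_self_eq_norm_sq]
    have e1 : ⟪w₁, w₁⟫ = (1 : ℝ) := by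
      rw [real_inner_self_eq_norm_sq, h₁]; norm_num
    have e2 : ⟪w₂, w₂⟫ = (1 : ℝ) := by
      rw [real_inner_self_eq_norm_sq, h₂]; norm_num
    rw [hn]
    simp only [inner_sub_left, inner_sub_right, e1, e2]
    rw [real_inner_comm ws w₁, real_inner_comm ws w₂, real_inner_comm w₂ w₁]
    ring
  rw [key]
  have ha : |⟪w₁, ws⟫| ≤ 1 := by
    calc |⟪w₁, ws⟫| ≤ ‖w₁‖ * ‖ws‖ := abs_real_inner_le_norm _ _
    _ = 1 := by rw [h₁, hs]; ring
  have hb : |⟪w₂, ws⟫| ≤ 1 := by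
    calc |⟪w₂, ws⟫| ≤ ‖w₂‖ * ‖ws‖ := abs_real_inner_le_norm _ _
    _ = 1 := by rw [h₂, hs]; ring
  rw [abs_le] at ha hb
  have c1 : Real.cos θ₁ = ⟪w₁, ws⟫ := by rw [hθ₁, Real.cos_arccos ha.1 ha.2]
  have c2 : Real.cos θ₂ = ⟪w₂, ws⟫ := by rw [hθ₂, Real.cos_arccos hb.1 hb.2]
  have hlip : |Real.cos θ₂ - Real.cos θ₁| ≤ |θ₂ - θ₁| := by
    rw [Real.cos_sub_cos]
    calc |(-2) * Real.sin ((θ₂ + θ₁) / 2) * Real.sin ((θ₂ - θ₁) / 2)|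
        = 2 * |Real.sin ((θ₂ + θ₁) / 2)| * |Real.sin ((θ₂ - θ₁) / 2)| := by
          rw [abs_mul, abs_mul]; norm_num
      _ ≤ 2 * 1 * |(θ₂ - θ₁) / 2| := by
          have h1 := Real.abs_sin_le_one ((θ₂ + θ₁) / 2)
          have h2 : |Real.sin ((θ₂ - θ₁) / 2)| ≤ |(θ₂ - θ₁) / 2| :=
            Real.abs_sin_le_abs
          have h3 := abs_nonneg (Real.sin ((θ₂ - θ₁) / 2))
          have h4 := abs_nonneg (Real.sin ((θ₂ + θ₁) / 2))
          nlinarith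
      _ = |θ₂ - θ₁| := by rw [abs_div, abs_two]; ring
  rw [← c1, ← c2]
  have := (abs_le.mp hlip).1
  have habs : |θ₂ - θ₁| = θ₁ - θ₂ := by rw [abs_of_nonpos (by linarith)]; ring
  rw [habs] at hlip
  have := (abs_le.mp hlip).2
  linarith
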